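/- The Mina margin map M(x) = lim_{k→∞} M_{k,k}(x) is continuous on (0,∞), and for every x ∈ (0,∞) the limits P_∞(x) = lim_k P_k(x), Q_∞(x) = lim_k Q_k(x), S_∞(x) = lim_k S_k(x) and T_∞(x) = lim_k T_k(x) exist as finite positive reals and M(x) = x·(S_∞(x) + T_∞(x))/(P_∞(x) + Q_∞(x)). -/

import Mathlib

/-- `ω(x) = √(8x+1)`. -/
noncomputable def wF (x : ℝ) : ℝ := Real.sqrt (8 * x + 1)

/-- `c(x) = (ω+3)²/16`. -/
noncomputable def cF (x : ℝ) : ℝ := (wF x + 3) ^ 2 / 16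

/-- `d(x) = (ω+3)²/(8(ω+1))`. -/
noncomputable def dF (x : ℝ) : ℝ := (wF x + 3) ^ 2 / (8 * (wF x + 1))

/-- `s(x) = (ω−1)²/(4(ω+7))`. -/
noncomputable def sF (x : ℝ) : ℝ := (wF x - 1) ^ 2 / (4 * (wF x + 7))

/-- `s₋₁(x) = 1/s(1/x)`, the inverse of `s`. -/
noncomputable def sFinv (x : ℝ) : ℝ := 1 / sF (1 / x)

/-- The ℤ-indexed iterates of `s`. -/
noncomputable def sIter (k : ℤ) (x : ℝ) : ℝ :=
  if 0 ≤ k then sF^[k.toNat] x else sFinv^[(-k).toNat] x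

/-- `P₀ = 1` and `P_{k+1} − P_k = ∏_{i=0}^{k} (c_i(x) − 1)`. -/
noncomputable def Pfun (x : ℝ) : ℕ → ℝ
  | 0 => 1
  | k + 1 => Pfun x k + ∏ i ∈ Finset.range (k + 1), (cF (sIter i x) - 1)

/-- `S₀ = 1` and `S_{k+1} − S_k = ∏_{i=0}^{k} (d_i(x) − 1)`. -/
noncomputable def Sfun (x : ℝ) : ℕ → ℝ
  | 0 => 1
  | k + 1 => Sfun x k + ∏ i ∈ Finset.range (k + 1), (dF (sIter i x) - 1)

/-- `Q₁ = 0` and `Q_{k+1} − Q_k = ∏_{i=1}^{k} (c_{−i}(x) − 1)⁻¹` for `k ≥ 1`. -/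
noncomputable def Qfun (x : ℝ) : ℕ → ℝ
  | 0 => 0
  | 1 => 0
  | k + 2 => Qfun x (k + 1) + ∏ i ∈ Finset.range (k + 1), (cF (sIter (-((i : ℤ) + 1)) x) - 1)⁻¹

/-- `T₁ = 0` and `T_{k+1} − T_k = ∏_{i=1}^{k} (d_{−i}(x) − 1)⁻¹` for `k ≥ 1`. -/
noncomputable def Tfun (x : ℝ) : ℕ → ℝ
  | 0 => 0
  | 1 => 0
  | k + 2 => Tfun x (k + 1) + ∏ i ∈ Finset.range (k + 1), (dF (sIter (-((i : ℤ) + 1)) x) - 1)⁻¹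

/-- The finite-trail Mina margin map `M_{ℓ,k}(x) = x(S_k + T_ℓ)/(P_k + Q_ℓ)`. -/
noncomputable def Mfin (l k : ℕ) (x : ℝ) : ℝ :=
  x * (Sfun x k + Tfun x l) / (Pfun x k + Qfun x l)

/-!
Since `s(x) ≤ x / 8` on `(0, ∞)`, the forward iterates satisfy `s_i x ≤ x / 8 ^ i` and the
backward ones `s_{−i} x ≥ 8 ^ i x`. Both `c` and `d` are continuous, increasing, equal to `1` at
`0` and unbounded, so the factors `c_i − 1`, `d_i − 1`, `(c_{−i} − 1)⁻¹`, `(d_{−i} − 1)⁻¹` tend to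
`0`, uniformly for `x` near any point of `(0, ∞)`. The series of their partial products are then
dominated, locally uniformly, by series that converge by the ratio test, so the four limits exist,
are positive (`P_∞, S_∞ ≥ 1`) and depend continuously on `x`; `M` is their continuous quotient.
-/

open Filter Topology

theorem summable_prod_range_of_le_of_tendsto_zero {g r : ℕ → ℝ} (hg0 : ∀ i, 0 ≤ g i)
    (hgr : ∀ i, g i ≤ r i) (hr : Tendsto r atTop (𝓝 0)) :
    Summable fun k => ∏ i ∈ Finset.range (k + 1), g i := by
  have hr0 i : 0 ≤ r i := (hg0 i).trans (hgr i)
  have hsum_r : Summable fun k => ∏ i ∈ Finset.range (k + 1), r i := by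
    refine summable_of_ratio_norm_eventually_le (r := 1 / 2) (by norm_num) ?_
    obtain ⟨N, hN⟩ := eventually_atTop.1 (hr.eventually (ge_mem_nhds (by norm_num : (0 : ℝ) < 1 / 2)))
    filter_upwards [eventually_ge_atTop N] with n hn
    rw [Finset.prod_range_succ _ (n + 1), norm_mul, mul_comm, Real.norm_of_nonneg (hr0 _)]
    exact mul_le_mul_of_nonneg_right (hN _ (by omega)) (norm_nonneg _)
  exact hsum_r.of_nonneg_of_le (fun k => Finset.prod_nonneg fun i _ => hg0 i)
    fun k => Finset.prod_le_prod (fun i _ => hg0 i) fun i _ => hgr i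

theorem continuousOn_tsum_prod_range {X : Type*} [TopologicalSpace X] {g : ℕ → X → ℝ}
    {U : Set X} (hU : IsOpen U) (hg : ∀ i, ContinuousOn (g i) U)
    (hg0 : ∀ i, ∀ y ∈ U, 0 ≤ g i y)
    (hloc : ∀ x ∈ U, ∃ r : ℕ → ℝ, Tendsto r atTop (𝓝 0) ∧ ∀ᶠ y in 𝓝 x, ∀ i, g i y ≤ r i) :
    ContinuousOn (fun y => ∑' k, ∏ i ∈ Finset.range (k + 1), g i y) U := by
  intro x hx
  obtain ⟨r, hr, hev⟩ := hloc x hx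
  have hV : U ∩ {y | ∀ i, g i y ≤ r i} ∈ 𝓝 x := inter_mem (hU.mem_nhds hx) hev
  have hr0 i : 0 ≤ r i := (hg0 i x hx).trans (hev.self_of_nhds i)
  refine (ContinuousOn.continuousAt ?_ hV).continuousWithinAt
  refine continuousOn_tsum
    (fun k => continuousOn_finsetProd _ fun i _ => (hg i).mono Set.inter_subset_left)
    (summable_prod_range_of_le_of_tendsto_zero hr0 (fun _ => le_rfl) hr) fun k y hy => ?_
  rw [Real.norm_of_nonneg (Finset.prod_nonneg fun i _ => hg0 i y hy.1)]
  exact Finset.prod_le_prod (fun i _ => hg0 i y hy.1) fun i _ => hy.2 i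

lemma wF_nonneg (x : ℝ) : 0 ≤ wF x := Real.sqrt_nonneg _

lemma wF_sq {x : ℝ} (hx : 0 ≤ x) : wF x ^ 2 = 8 * x + 1 :=
  Real.sq_sqrt (by linarith)

lemma wF_zero : wF 0 = 1 := by norm_num [wF]

lemma strictMonoOn_wF : StrictMonoOn wF (Set.Ici 0) := fun x hx y _ hxy =>
  Real.sqrt_lt_sqrt (by linarith [Set.mem_Ici.1 hx]) (by linarith)

lemma one_lt_wF {x : ℝ} (hx : 0 < x) : 1 < wF x :=
  wF_zero ▸ strictMonoOn_wF Set.self_mem_Ici hx.le hx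

lemma one_le_wF {x : ℝ} (hx : 0 ≤ x) : 1 ≤ wF x :=
  hx.eq_or_lt.elim (fun h => h ▸ wF_zero.ge) fun h => (one_lt_wF h).le

@[fun_prop] lemma continuous_wF : Continuous wF := by
  unfold wF; fun_prop

lemma tendsto_wF_atTop : Tendsto wF atTop atTop :=
  Real.tendsto_sqrt_atTop.comp <|
    tendsto_atTop_add_const_right _ 1 (tendsto_id.const_mul_atTop (by norm_num))

lemma sF_pos {x : ℝ} (hx : 0 < x) : 0 < sF x := by
  have := one_lt_wF hx
  exact div_pos (by nlinarith) (by linarith)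

lemma sF_le {x : ℝ} (hx : 0 < x) : sF x ≤ x / 8 := by
  have h1 := one_lt_wF hx
  have h2 := wF_sq hx.le
  rw [sF, div_le_div_iff₀ (by linarith) (by norm_num)]
  nlinarith [sq_nonneg (wF x - 4), sq_nonneg (wF x - 1)]

lemma sFinv_pos {x : ℝ} (hx : 0 < x) : 0 < sFinv x :=
  div_pos one_pos (sF_pos (by positivity))

lemma le_sFinv {x : ℝ} (hx : 0 < x) : 8 * x ≤ sFinv x := by
  have h := sF_le (one_div_pos.2 hx)
  rw [sFinv, le_div_iff₀ (sF_pos (one_div_pos.2 hx))]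
  calc 8 * x * sF (1 / x) ≤ 8 * x * (1 / x / 8) := by gcongr
    _ = 1 := by field_simp

@[fun_prop] lemma continuous_sF : Continuous sF := by
  unfold sF
  refine Continuous.div (by fun_prop) (by fun_prop) fun x => ?_
  have := wF_nonneg x
  positivity

lemma continuousOn_sFinv : ContinuousOn sFinv (Set.Ioi 0) :=
  continuousOn_const.div
    (continuous_sF.comp_continuousOn (continuousOn_const.div continuousOn_id fun _ hx => hx.ne'))
    fun _ hx => (sF_pos (one_div_pos.2 hx)).ne'

lemma sF_iterate_pos {x : ℝ} (hx : 0 < x) (n : ℕ) : 0 < sF^[n] x :=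
  Set.MapsTo.iterate (fun _ hy => sF_pos hy) n hx

lemma sFinv_iterate_pos {x : ℝ} (hx : 0 < x) (n : ℕ) : 0 < sFinv^[n] x :=
  Set.MapsTo.iterate (fun _ hy => sFinv_pos hy) n hx

lemma sF_iterate_le {x : ℝ} (hx : 0 < x) (n : ℕ) : sF^[n] x ≤ x / 8 ^ n := by
  induction n with
  | zero => simp
  | succ n ih =>
    rw [Function.iterate_succ_apply', pow_succ, ← div_div]
    exact (sF_le (sF_iterate_pos hx n)).trans (by gcongr)

lemma le_sFinv_iterate {x : ℝ} (hx : 0 < x) (n : ℕ) : 8 ^ n * x ≤ sFinv^[n] x := by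
  induction n with
  | zero => simp
  | succ n ih =>
    rw [Function.iterate_succ_apply', pow_succ', mul_assoc]
    exact (by gcongr : 8 * (8 ^ n * x) ≤ 8 * sFinv^[n] x).trans (le_sFinv (sFinv_iterate_pos hx n))

lemma sIter_natCast (i : ℕ) (x : ℝ) : sIter i x = sF^[i] x := by
  simp [sIter]

lemma sIter_neg_succ (i : ℕ) (x : ℝ) : sIter (-((i : ℤ) + 1)) x = sFinv^[i + 1] x := by
  rw [sIter, if_neg (by omega)]
  congr 2

/-- The properties of `c` and `d` on which the convergence and continuity of the four series rest. -/
structure IsGrowthFactor (G : ℝ → ℝ) : Prop where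
  continuous : Continuous G
  strictMonoOn : StrictMonoOn G (Set.Ici 0)
  map_zero : G 0 = 1
  tendsto_atTop : Tendsto G atTop atTop

/-- `P_∞ = forwardSeries c` and `S_∞ = forwardSeries d`. -/
noncomputable def forwardSeries (G : ℝ → ℝ) (x : ℝ) : ℝ :=
  1 + ∑' k, ∏ i ∈ Finset.range (k + 1), (G (sIter i x) - 1)

/-- `Q_∞ = backwardSeries c` and `T_∞ = backwardSeries d`; the index `i` stands for `s_{−i−1}`. -/
noncomputable def backwardSeries (G : ℝ → ℝ) (x : ℝ) : ℝ :=
  ∑' k, ∏ i ∈ Finset.range (k + 1), (G (sIter (-((i : ℤ) + 1)) x) - 1)⁻¹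

namespace IsGrowthFactor

variable {G : ℝ → ℝ}

lemma one_lt (hG : IsGrowthFactor G) {x : ℝ} (hx : 0 < x) : 1 < G x :=
  hG.map_zero ▸ hG.strictMonoOn Set.self_mem_Ici hx.le hx

lemma forward_factor_pos (hG : IsGrowthFactor G) {x : ℝ} (hx : 0 < x) (i : ℕ) :
    0 < G (sIter i x) - 1 := by
  rw [sIter_natCast]
  linarith [hG.one_lt (sF_iterate_pos hx i)]

lemma backward_factor_pos (hG : IsGrowthFactor G) {x : ℝ} (hx : 0 < x) (i : ℕ) :
    0 < (G (sIter (-((i : ℤ) + 1)) x) - 1)⁻¹ := by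
  rw [sIter_neg_succ, inv_pos]
  linarith [hG.one_lt (sFinv_iterate_pos hx (i + 1))]

/-- Near `x` we have `s_i y ≤ 2x / 8 ^ i`. -/
lemma forward_factor_locally_bounded (hG : IsGrowthFactor G) {x : ℝ} (hx : 0 < x) :
    ∃ r : ℕ → ℝ, Tendsto r atTop (𝓝 0) ∧ ∀ᶠ y in 𝓝 x, ∀ i : ℕ, G (sIter i y) - 1 ≤ r i := by
  refine ⟨fun i => G (2 * x / 8 ^ i) - 1, ?_, ?_⟩
  · have h := (hG.continuous.tendsto 0).comp <| (tendsto_const_nhds (x := 2 * x)).div_atTop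
      (tendsto_pow_atTop_atTop_of_one_lt (by norm_num : (1 : ℝ) < 8))
    simpa [hG.map_zero] using h.sub_const 1
  · filter_upwards [Ioo_mem_nhds hx (by linarith : x < 2 * x)] with y hy i
    rw [sIter_natCast, sub_le_sub_iff_right]
    exact hG.strictMonoOn.monotoneOn (sF_iterate_pos hy.1 i).le (Set.mem_Ici.2 (by positivity))
      ((sF_iterate_le hy.1 i).trans (by gcongr; exact hy.2.le))

/-- Near `x` we have `s_{−i−1} y ≥ 8 ^ i x / 2`. -/
lemma backward_factor_locally_bounded (hG : IsGrowthFactor G) {x : ℝ} (hx : 0 < x) :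
    ∃ r : ℕ → ℝ, Tendsto r atTop (𝓝 0) ∧
      ∀ᶠ y in 𝓝 x, ∀ i : ℕ, (G (sIter (-((i : ℤ) + 1)) y) - 1)⁻¹ ≤ r i := by
  refine ⟨fun i => (G (8 ^ i * (x / 2)) - 1)⁻¹, ?_, ?_⟩
  · exact tendsto_inv_atTop_zero.comp <| tendsto_atTop_add_const_right _ (-1) <|
      hG.tendsto_atTop.comp <| (tendsto_pow_atTop_atTop_of_one_lt (by norm_num)).atTop_mul_const
        (by positivity)
  · filter_upwards [Ioi_mem_nhds (by linarith : x / 2 < x)] with y hy i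
    have hy0 : 0 < y := by linarith [Set.mem_Ioi.1 hy]
    rw [sIter_neg_succ]
    refine inv_anti₀ (by linarith [hG.one_lt (by positivity : 0 < 8 ^ i * (x / 2))]) ?_
    refine sub_le_sub_right (hG.strictMonoOn.monotoneOn (Set.mem_Ici.2 (by positivity))
      (Set.mem_Ici.2 (sFinv_iterate_pos hy0 _).le) ?_) 1
    calc 8 ^ i * (x / 2) ≤ 8 ^ (i + 1) * y := by
          rw [pow_succ]; nlinarith [Set.mem_Ioi.1 hy, pow_pos (by norm_num : (0 : ℝ) < 8) i]
      _ ≤ sFinv^[i + 1] y := le_sFinv_iterate hy0 _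

lemma summable_forward (hG : IsGrowthFactor G) {x : ℝ} (hx : 0 < x) :
    Summable fun k => ∏ i ∈ Finset.range (k + 1), (G (sIter i x) - 1) :=
  let ⟨_, hr, hev⟩ := hG.forward_factor_locally_bounded hx
  summable_prod_range_of_le_of_tendsto_zero (fun i => (hG.forward_factor_pos hx i).le)
    hev.self_of_nhds hr

lemma summable_backward (hG : IsGrowthFactor G) {x : ℝ} (hx : 0 < x) :
    Summable fun k => ∏ i ∈ Finset.range (k + 1), (G (sIter (-((i : ℤ) + 1)) x) - 1)⁻¹ :=
  let ⟨_, hr, hev⟩ := hG.backward_factor_locally_bounded hx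
  summable_prod_range_of_le_of_tendsto_zero (fun i => (hG.backward_factor_pos hx i).le)
    hev.self_of_nhds hr

lemma one_le_forwardSeries (hG : IsGrowthFactor G) {x : ℝ} (hx : 0 < x) :
    1 ≤ forwardSeries G x :=
  le_add_of_nonneg_right <| tsum_nonneg fun _ =>
    Finset.prod_nonneg fun i _ => (hG.forward_factor_pos hx i).le

lemma backwardSeries_pos (hG : IsGrowthFactor G) {x : ℝ} (hx : 0 < x) :
    0 < backwardSeries G x :=
  (hG.summable_backward hx).tsum_pos
    (fun _ => Finset.prod_nonneg fun i _ => (hG.backward_factor_pos hx i).le) 0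
    (Finset.prod_pos fun i _ => hG.backward_factor_pos hx i)

lemma tendsto_forwardSeries (hG : IsGrowthFactor G) {x : ℝ} (hx : 0 < x) :
    Tendsto (fun n => 1 + ∑ k ∈ Finset.range n, ∏ i ∈ Finset.range (k + 1), (G (sIter i x) - 1))
      atTop (𝓝 (forwardSeries G x)) :=
  (hG.summable_forward hx).hasSum.tendsto_sum_nat.const_add 1

lemma tendsto_backwardSeries (hG : IsGrowthFactor G) {x : ℝ} (hx : 0 < x) :
    Tendsto (fun n => ∑ k ∈ Finset.range n,
      ∏ i ∈ Finset.range (k + 1), (G (sIter (-((i : ℤ) + 1)) x) - 1)⁻¹)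
      atTop (𝓝 (backwardSeries G x)) :=
  (hG.summable_backward hx).hasSum.tendsto_sum_nat

lemma continuousOn_forwardSeries (hG : IsGrowthFactor G) :
    ContinuousOn (forwardSeries G) (Set.Ioi 0) := by
  refine continuousOn_const.add (continuousOn_tsum_prod_range isOpen_Ioi (fun i => ?_)
    (fun i _ hy => (hG.forward_factor_pos hy i).le) fun _ hx => hG.forward_factor_locally_bounded hx)
  simp only [sIter_natCast]
  exact ((hG.continuous.comp (continuous_sF.iterate i)).sub continuous_const).continuousOn

lemma continuousOn_backwardSeries (hG : IsGrowthFactor G) :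
    ContinuousOn (backwardSeries G) (Set.Ioi 0) := by
  refine continuousOn_tsum_prod_range isOpen_Ioi (fun i => ?_)
    (fun i _ hy => (hG.backward_factor_pos hy i).le) fun _ hx => hG.backward_factor_locally_bounded hx
  simp only [sIter_neg_succ]
  refine ((hG.continuous.comp_continuousOn (continuousOn_sFinv.iterate
    (fun _ hy => sFinv_pos hy) (i + 1))).sub continuousOn_const).inv₀ fun y hy => ?_
  exact (sub_pos.2 (hG.one_lt (sFinv_iterate_pos hy (i + 1)))).ne'

end IsGrowthFactor

lemma isGrowthFactor_cF : IsGrowthFactor cF where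
  continuous := by unfold cF; fun_prop
  strictMonoOn x hx y hy hxy := by
    have := strictMonoOn_wF hx hy hxy
    have := wF_nonneg x
    unfold cF; gcongr
  map_zero := by norm_num [cF, wF_zero]
  tendsto_atTop := by
    refine tendsto_atTop_mono (fun x => ?_)
      ((tendsto_atTop_add_const_right _ 1 tendsto_wF_atTop).atTop_div_const (by norm_num : (0 : ℝ) < 8))
    have := wF_nonneg x
    rw [cF, div_le_div_iff₀ (by norm_num) (by norm_num)]
    nlinarith

lemma isGrowthFactor_dF : IsGrowthFactor dF where
  continuous := by
    unfold dF
    refine Continuous.div (by fun_prop) (by fun_prop) fun x => ?_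
    have := wF_nonneg x
    positivity
  strictMonoOn x hx y hy hxy := by
    have hw := strictMonoOn_wF hx hy hxy
    have h1 := one_le_wF hx
    rw [dF, dF, div_lt_div_iff₀ (by linarith) (by linarith)]
    nlinarith [mul_pos (sub_pos.2 hw) (by nlinarith : (0 : ℝ) < wF x * wF y + wF x + wF y - 3)]
  map_zero := by norm_num [dF, wF_zero]
  tendsto_atTop := by
    refine tendsto_atTop_mono (fun x => ?_)
      ((tendsto_atTop_add_const_right _ 1 tendsto_wF_atTop).atTop_div_const (by norm_num : (0 : ℝ) < 8))
    have := wF_nonneg x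
    rw [dF, div_le_div_iff₀ (by norm_num) (by positivity)]
    nlinarith

lemma Pfun_eq_one_add_sum (x : ℝ) (n : ℕ) :
    Pfun x n = 1 + ∑ k ∈ Finset.range n, ∏ i ∈ Finset.range (k + 1), (cF (sIter i x) - 1) := by
  induction n with
  | zero => simp [Pfun]
  | succ n ih => rw [Pfun, ih, Finset.sum_range_succ, add_assoc]

lemma Sfun_eq_one_add_sum (x : ℝ) (n : ℕ) :
    Sfun x n = 1 + ∑ k ∈ Finset.range n, ∏ i ∈ Finset.range (k + 1), (dF (sIter i x) - 1) := by
  induction n with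
  | zero => simp [Sfun]
  | succ n ih => rw [Sfun, ih, Finset.sum_range_succ, add_assoc]

lemma Qfun_succ_eq_sum (x : ℝ) (n : ℕ) : Qfun x (n + 1) =
    ∑ k ∈ Finset.range n, ∏ i ∈ Finset.range (k + 1), (cF (sIter (-((i : ℤ) + 1)) x) - 1)⁻¹ := by
  induction n with
  | zero => simp [Qfun]
  | succ n ih => rw [Qfun, ih, Finset.sum_range_succ]

lemma Tfun_succ_eq_sum (x : ℝ) (n : ℕ) : Tfun x (n + 1) =
    ∑ k ∈ Finset.range n, ∏ i ∈ Finset.range (k + 1), (dF (sIter (-((i : ℤ) + 1)) x) - 1)⁻¹ := by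
  induction n with
  | zero => simp [Tfun]
  | succ n ih => rw [Tfun, ih, Finset.sum_range_succ]

lemma tendsto_Pfun {x : ℝ} (hx : 0 < x) : Tendsto (Pfun x) atTop (𝓝 (forwardSeries cF x)) := by
  simpa only [← Pfun_eq_one_add_sum] using isGrowthFactor_cF.tendsto_forwardSeries hx

lemma tendsto_Sfun {x : ℝ} (hx : 0 < x) : Tendsto (Sfun x) atTop (𝓝 (forwardSeries dF x)) := by
  simpa only [← Sfun_eq_one_add_sum] using isGrowthFactor_dF.tendsto_forwardSeries hx

lemma tendsto_Qfun {x : ℝ} (hx : 0 < x) : Tendsto (Qfun x) atTop (𝓝 (backwardSeries cF x)) :=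
  (tendsto_add_atTop_iff_nat 1).1 <| by
    simpa only [← Qfun_succ_eq_sum] using isGrowthFactor_cF.tendsto_backwardSeries hx

lemma tendsto_Tfun {x : ℝ} (hx : 0 < x) : Tendsto (Tfun x) atTop (𝓝 (backwardSeries dF x)) :=
  (tendsto_add_atTop_iff_nat 1).1 <| by
    simpa only [← Tfun_succ_eq_sum] using isGrowthFactor_dF.tendsto_backwardSeries hx

/-- The Mina margin map `M(x) = lim_k M_{k,k}(x)` is continuous on `(0,∞)`; moreover for
every `x > 0` the four limits `P_∞(x), Q_∞(x), S_∞(x), T_∞(x)` exist as finite positive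
reals and `M(x) = x(S_∞(x) + T_∞(x))/(P_∞(x) + Q_∞(x))`. -/
theorem mina_margin_continuous_formula :
    ∃ M : ℝ → ℝ,
      (∀ x : ℝ, 0 < x →
        Filter.Tendsto (fun k : ℕ => Mfin k k x) Filter.atTop (nhds (M x))) ∧
      ContinuousOn M (Set.Ioi 0) ∧
      ∀ x : ℝ, 0 < x →
        ∃ Pi Qi Si Ti : ℝ, 0 < Pi ∧ 0 < Qi ∧ 0 < Si ∧ 0 < Ti ∧
          Filter.Tendsto (Pfun x) Filter.atTop (nhds Pi) ∧
          Filter.Tendsto (Qfun x) Filter.atTop (nhds Qi) ∧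
          Filter.Tendsto (Sfun x) Filter.atTop (nhds Si) ∧
          Filter.Tendsto (Tfun x) Filter.atTop (nhds Ti) ∧
          M x = x * (Si + Ti) / (Pi + Qi) := by
  have hc := isGrowthFactor_cF
  have hd := isGrowthFactor_dF
  have hden {x : ℝ} (hx : 0 < x) : forwardSeries cF x + backwardSeries cF x ≠ 0 :=
    (add_pos_of_pos_of_nonneg (one_pos.trans_le (hc.one_le_forwardSeries hx))
      (hc.backwardSeries_pos hx).le).ne'
  refine ⟨fun x => x * (forwardSeries dF x + backwardSeries dF x) /
    (forwardSeries cF x + backwardSeries cF x), fun x hx => ?_, ?_, fun x hx => ?_⟩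
  · exact (tendsto_const_nhds.mul ((tendsto_Sfun hx).add (tendsto_Tfun hx))).div
      ((tendsto_Pfun hx).add (tendsto_Qfun hx)) (hden hx)
  · exact (continuousOn_id.mul (hd.continuousOn_forwardSeries.add hd.continuousOn_backwardSeries)).div
      (hc.continuousOn_forwardSeries.add hc.continuousOn_backwardSeries) fun x hx => hden hx
  · exact ⟨_, _, _, _, one_pos.trans_le (hc.one_le_forwardSeries hx), hc.backwardSeries_pos hx,
      one_pos.trans_le (hd.one_le_forwardSeries hx), hd.backwardSeries_pos hx,
      tendsto_Pfun hx, tendsto_Qfun hx, tendsto_Sfun hx, tendsto_Tfun hx, rfl⟩
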